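/- arXiv:2505.17958 — 3 statements merged into one kernel-verified Lean document; each statement's English description precedes it below -/
import Mathlib

section
/- Let Γ be a real symmetric d×d matrix with spectral decomposition Γ = O D Oᵀ (eigenvalues D_i sorted decreasingly), and let k > 0, ℓ ≥ 0, τ ≥ 0. Then the minimizer over positive semidefinite matrices Z of [ ℓ Tr(Z) + τ‖Z‖_F² + (k/2)‖Z − k⁻¹Γ‖_F² ] is Z* = O L Oᵀ with L_i = ReLU(D_i − ℓ)/(2τ + k), where ReLU(t) = max(t,0). That is, the proximal operator of the nuclear norm plus Frobenius penalty restricted to the PSD cone acts by soft-thresholding the eigenvalues. -/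
open Matrix BigOperators

/-- Proximal operator of nuclear norm plus Frobenius penalty on the PSD cone:
for `Γ = O D Oᵀ` symmetric with eigenvalues sorted decreasingly, `k > 0`, `ℓ ≥ 0`,
`τ ≥ 0`, the unique PSD minimizer of `ℓ Tr Z + τ‖Z‖_F² + (k/2)‖Z − k⁻¹Γ‖_F²` is
`Z* = O L Oᵀ` with `L_i = ReLU(D_i − ℓ)/(2τ + k)` (eigenvalue soft-thresholding). -/
theorem psd_prox_soft_threshold (d : ℕ) (O : Matrix (Fin d) (Fin d) ℝ)
    (hO : O * Oᵀ = 1) (D : Fin d → ℝ) (hD : ∀ i j : Fin d, i ≤ j → D j ≤ D i)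
    (k l tau : ℝ) (hk : 0 < k) (hl : 0 ≤ l) (htau : 0 ≤ tau) :
    let Γ : Matrix (Fin d) (Fin d) ℝ := O * Matrix.diagonal D * Oᵀ
    let L : Fin d → ℝ := fun i => max (D i - l) 0 / (2 * tau + k)
    let Zstar : Matrix (Fin d) (Fin d) ℝ := O * Matrix.diagonal L * Oᵀ
    let obj : Matrix (Fin d) (Fin d) ℝ → ℝ := fun Z =>
      l * Matrix.trace Z + tau * (∑ i, ∑ j, (Z i j) ^ 2)
        + (k / 2) * ∑ i, ∑ j, ((Z - k⁻¹ • Γ) i j) ^ 2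
    Zstar.PosSemidef ∧
    (∀ Z : Matrix (Fin d) (Fin d) ℝ, Z.PosSemidef → obj Zstar ≤ obj Z) ∧
    (∀ Z : Matrix (Fin d) (Fin d) ℝ, Z.PosSemidef → obj Z = obj Zstar → Z = Zstar) := by
  intro Γ L Zstar obj
  have hc : (0:ℝ) < 2 * tau + k := by linarith
  have hOtO : Oᵀ * O = 1 := mul_eq_one_comm.mp hO
  have hL : ∀ i, 0 ≤ L i := fun i => div_nonneg (le_max_right _ _) hc.le
  -- conjugation by O preserves PSD
  have hconj : ∀ a : Fin d → ℝ, (∀ i, 0 ≤ a i) →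
      (O * Matrix.diagonal a * Oᵀ).PosSemidef := by
    intro a ha
    have := (Matrix.posSemidef_diagonal_iff.mpr ha).mul_mul_conjTranspose_same O
    simpa [Matrix.conjTranspose_eq_transpose_of_trivial] using this
  have hZstar : Zstar.PosSemidef := hconj L hL
  -- the "gradient" matrix
  set g : Fin d → ℝ := fun i => max (l - D i) 0 with hg
  set G : Matrix (Fin d) (Fin d) ℝ := O * Matrix.diagonal g * Oᵀ with hGdef
  have hGpsd : G.PosSemidef := hconj g (fun i => le_max_right _ _)
  -- entries of conjugated diagonal matrices
  have hdiag_entry : ∀ (a : Fin d → ℝ) (i j : Fin d),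
      (O * Matrix.diagonal a * Oᵀ) i j = ∑ m, O i m * a m * O j m := by
    intro a i j
    rw [Matrix.mul_assoc, Matrix.mul_apply]
    refine Finset.sum_congr rfl fun m _ => ?_
    rw [Matrix.diagonal_mul, Matrix.transpose_apply]
    ring
  -- key entrywise formula for G
  have hGentry : ∀ i j, G i j = (2 * tau + k) * Zstar i j
      + l * (1 : Matrix (Fin d) (Fin d) ℝ) i j - Γ i j := by
    intro i j
    have h1 : (1 : Matrix (Fin d) (Fin d) ℝ) i j = ∑ m, O i m * O j m := by
      rw [← hO]; simp [Matrix.mul_apply, Matrix.transpose_apply]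
    have hZe : Zstar i j = ∑ m, O i m * L m * O j m := hdiag_entry L i j
    have hΓe : Γ i j = ∑ m, O i m * D m * O j m := hdiag_entry D i j
    rw [hGdef, hdiag_entry, h1, hZe, hΓe, Finset.mul_sum,
      Finset.mul_sum, ← Finset.sum_add_distrib, ← Finset.sum_sub_distrib]
    refine Finset.sum_congr rfl fun m _ => ?_
    have hLm : (2 * tau + k) * L m = max (D m - l) 0 := by
      show (2 * tau + k) * (max (D m - l) 0 / (2 * tau + k)) = max (D m - l) 0
      field_simp [hc.ne']
    have : g m = (2 * tau + k) * L m + l - D m := by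
      rw [hLm, hg]
      show (l - D m) ⊔ 0 = (D m - l) ⊔ 0 + l - D m
      rcases le_total (D m) l with h | h
      · rw [max_eq_left (sub_nonneg.mpr h), max_eq_right (sub_nonpos.mpr h)]
        ring
      · rw [max_eq_right (sub_nonpos.mpr h), max_eq_left (sub_nonneg.mpr h)]
        ring
    rw [this]; ring
  -- Frobenius inner product as a trace
  have hsum_trace : ∀ A B : Matrix (Fin d) (Fin d) ℝ,
      ∑ i, ∑ j, A i j * B i j = Matrix.trace (A * Bᵀ) := by
    intro A B
    simp [Matrix.trace, Matrix.diag, Matrix.mul_apply, Matrix.transpose_apply]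
  -- diagonal entries of PSD matrices are nonnegative
  have hdiag_nonneg : ∀ M : Matrix (Fin d) (Fin d) ℝ, M.PosSemidef →
      ∀ i, 0 ≤ M i i := by
    intro M hM i
    exact hM.diag_nonneg
  -- inner product of G with any PSD matrix is nonnegative
  have hinner : ∀ Z : Matrix (Fin d) (Fin d) ℝ, Z.PosSemidef →
      0 ≤ ∑ i, ∑ j, G i j * Z i j := by
    intro Z hZ
    have hZt : Zᵀ = Z := by
      have := hZ.isHermitian
      exact (by simpa [Matrix.conjTranspose_eq_transpose_of_trivial] using this : Z.IsSymm).eq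
    rw [hsum_trace, hZt, hGdef]
    have : O * Matrix.diagonal g * Oᵀ * Z = (O * Matrix.diagonal g) * (Oᵀ * Z) := by
      rw [Matrix.mul_assoc]
    rw [this, Matrix.trace_mul_comm]
    have h2 : Oᵀ * Z * (O * Matrix.diagonal g) = (Oᵀ * Z * O) * Matrix.diagonal g := by
      rw [← Matrix.mul_assoc]
    rw [h2]
    have hZO : (Oᵀ * Z * O).PosSemidef := by
      have := hZ.conjTranspose_mul_mul_same O
      simpa [Matrix.conjTranspose_eq_transpose_of_trivial] using this
    rw [Matrix.trace]
    refine Finset.sum_nonneg fun m _ => ?_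
    simp only [Matrix.diag_apply, Matrix.mul_diagonal]
    exact mul_nonneg (hdiag_nonneg _ hZO m) (le_max_right _ _)
  -- inner product of G with Zstar is zero
  have hGZstar : ∑ i, ∑ j, G i j * Zstar i j = 0 := by
    have hZt : Zstarᵀ = Zstar := by
      have := hZstar.isHermitian
      exact (by simpa [Matrix.conjTranspose_eq_transpose_of_trivial] using this : Zstar.IsSymm).eq
    rw [hsum_trace, hZt]
    have : G * Zstar = O * (Matrix.diagonal g * Matrix.diagonal L) * Oᵀ := by
      show O * Matrix.diagonal g * Oᵀ * (O * Matrix.diagonal L * Oᵀ) = _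
      calc O * Matrix.diagonal g * Oᵀ * (O * Matrix.diagonal L * Oᵀ)
          = O * Matrix.diagonal g * (Oᵀ * O) * Matrix.diagonal L * Oᵀ := by
            simp only [Matrix.mul_assoc]
        _ = O * (Matrix.diagonal g * Matrix.diagonal L) * Oᵀ := by
            rw [hOtO]; simp only [Matrix.mul_assoc, Matrix.one_mul]
    rw [this, Matrix.trace_mul_cycle, ← Matrix.mul_assoc, hOtO, Matrix.one_mul,
      Matrix.diagonal_mul_diagonal, Matrix.trace_diagonal]
    refine Finset.sum_eq_zero fun m _ => ?_
    rcases le_total (D m) l with h | h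
    · have : L m = 0 := by
        simp [L, max_eq_right (sub_nonpos.mpr h)]
      simp [this]
    · have : g m = 0 := by
        simp [hg, max_eq_right (sub_nonpos.mpr h)]
      simp [this]
  -- canonical expanded form of the objective
  have hform : ∀ Z : Matrix (Fin d) (Fin d) ℝ, obj Z =
      ∑ i, ∑ j, ((2 * tau + k) / 2 * (Z i j) ^ 2
        + (l * (1 : Matrix (Fin d) (Fin d) ℝ) i j - Γ i j) * Z i j
        + (Γ i j) ^ 2 / (2 * k)) := by
    intro Z
    have htr : l * Matrix.trace Z
        = ∑ i, ∑ j, l * (1 : Matrix (Fin d) (Fin d) ℝ) i j * Z i j := by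
      rw [Matrix.trace, Finset.mul_sum]
      refine Finset.sum_congr rfl fun i _ => ?_
      simp [Matrix.one_apply, mul_ite, ite_mul, Finset.sum_ite_eq]
    show l * Matrix.trace Z + tau * (∑ i, ∑ j, (Z i j) ^ 2)
        + (k / 2) * ∑ i, ∑ j, ((Z - k⁻¹ • Γ) i j) ^ 2 = _
    rw [htr, Finset.mul_sum, Finset.mul_sum, ← Finset.sum_add_distrib,
      ← Finset.sum_add_distrib]
    refine Finset.sum_congr rfl fun i _ => ?_
    rw [Finset.mul_sum, Finset.mul_sum, ← Finset.sum_add_distrib,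
      ← Finset.sum_add_distrib]
    refine Finset.sum_congr rfl fun j _ => ?_
    simp only [Matrix.sub_apply, Matrix.smul_apply, smul_eq_mul]
    field_simp
    ring
  -- the fundamental identity
  have hkey : ∀ Z : Matrix (Fin d) (Fin d) ℝ, obj Z = obj Zstar
      + (2 * tau + k) / 2 * (∑ i, ∑ j, (Z i j - Zstar i j) ^ 2)
      + ∑ i, ∑ j, G i j * (Z i j - Zstar i j) := by
    intro Z
    rw [hform Z, hform Zstar]
    have : ∀ i j : Fin d, (2 * tau + k) / 2 * (Z i j) ^ 2
        + (l * (1 : Matrix (Fin d) (Fin d) ℝ) i j - Γ i j) * Z i j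
        + (Γ i j) ^ 2 / (2 * k)
        = ((2 * tau + k) / 2 * (Zstar i j) ^ 2
            + (l * (1 : Matrix (Fin d) (Fin d) ℝ) i j - Γ i j) * Zstar i j
            + (Γ i j) ^ 2 / (2 * k))
          + (2 * tau + k) / 2 * (Z i j - Zstar i j) ^ 2
          + G i j * (Z i j - Zstar i j) := by
      intro i j
      rw [hGentry i j]
      ring
    calc ∑ i, ∑ j, ((2 * tau + k) / 2 * (Z i j) ^ 2
          + (l * (1 : Matrix (Fin d) (Fin d) ℝ) i j - Γ i j) * Z i j
          + (Γ i j) ^ 2 / (2 * k))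
        = ∑ i, ∑ j, (((2 * tau + k) / 2 * (Zstar i j) ^ 2
            + (l * (1 : Matrix (Fin d) (Fin d) ℝ) i j - Γ i j) * Zstar i j
            + (Γ i j) ^ 2 / (2 * k))
          + (2 * tau + k) / 2 * (Z i j - Zstar i j) ^ 2
          + G i j * (Z i j - Zstar i j)) := by
          exact Finset.sum_congr rfl fun i _ => Finset.sum_congr rfl fun j _ => this i j
      _ = _ := by
          simp only [Finset.sum_add_distrib, Finset.mul_sum]
  -- inner product with difference is nonnegative for PSD Z
  have hinner_diff : ∀ Z : Matrix (Fin d) (Fin d) ℝ, Z.PosSemidef →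
      0 ≤ ∑ i, ∑ j, G i j * (Z i j - Zstar i j) := by
    intro Z hZ
    have : ∑ i, ∑ j, G i j * (Z i j - Zstar i j)
        = (∑ i, ∑ j, G i j * Z i j) - ∑ i, ∑ j, G i j * Zstar i j := by
      simp [mul_sub, Finset.sum_sub_distrib]
    rw [this, hGZstar, sub_zero]
    exact hinner Z hZ
  refine ⟨hZstar, fun Z hZ => ?_, fun Z hZ heq => ?_⟩
  · rw [hkey Z]
    have h1 : 0 ≤ (2 * tau + k) / 2 * (∑ i, ∑ j, (Z i j - Zstar i j) ^ 2) := by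
      refine mul_nonneg (by linarith) ?_
      exact Finset.sum_nonneg fun i _ => Finset.sum_nonneg fun j _ => sq_nonneg _
    have h2 := hinner_diff Z hZ
    linarith
  · have h0 := hkey Z
    rw [heq] at h0
    have h1 : 0 ≤ (2 * tau + k) / 2 * (∑ i, ∑ j, (Z i j - Zstar i j) ^ 2) := by
      refine mul_nonneg (by linarith) ?_
      exact Finset.sum_nonneg fun i _ => Finset.sum_nonneg fun j _ => sq_nonneg _
    have h2 := hinner_diff Z hZ
    have hsq : ∑ i, ∑ j, (Z i j - Zstar i j) ^ 2 = 0 := by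
      have : (2 * tau + k) / 2 * (∑ i, ∑ j, (Z i j - Zstar i j) ^ 2) = 0 := by
        linarith
      have hpos : (0:ℝ) < (2 * tau + k) / 2 := by linarith
      exact (mul_eq_zero.mp this).resolve_left (ne_of_gt hpos)
    ext i j
    have hi := (Finset.sum_eq_zero_iff_of_nonneg
      (fun i _ => Finset.sum_nonneg fun j _ => sq_nonneg (Z i j - Zstar i j))).mp hsq
      i (Finset.mem_univ i)
    have hij := (Finset.sum_eq_zero_iff_of_nonneg
      (fun j _ => sq_nonneg (Z i j - Zstar i j))).mp hi j (Finset.mem_univ j)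
    have := sq_eq_zero_iff.mp hij
    linarith [this]
end

section
/- (Von Neumann alignment step) Let D, L be real diagonal d×d matrices whose diagonal entries are both sorted in decreasing order. Then for every orthogonal matrix V ∈ O(d), Tr(V L Vᵀ D) ≤ Tr(L D), i.e. the maximum over V ∈ O(d) of Tr(V L Vᵀ D) is attained at V = I. -/
open Matrix BigOperators

/-- Von Neumann alignment step: for real diagonal matrices `D`, `L` with diagonal
entries sorted decreasingly, and any orthogonal `V`,
`Tr(V L Vᵀ D) ≤ Tr(L D)`; i.e. the maximum over `V ∈ O(d)` is attained at `V = I`. -/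
theorem von_neumann_alignment (d : ℕ) (D L : Fin d → ℝ)
    (hD : ∀ i j : Fin d, i ≤ j → D j ≤ D i)
    (hL : ∀ i j : Fin d, i ≤ j → L j ≤ L i)
    (V : Matrix (Fin d) (Fin d) ℝ) (hV : V * Vᵀ = 1) :
    Matrix.trace (V * Matrix.diagonal L * Vᵀ * Matrix.diagonal D)
      ≤ Matrix.trace (Matrix.diagonal L * Matrix.diagonal D) := by
  have hV' : Vᵀ * V = 1 := mul_eq_one_comm.mp hV
  -- the matrix of squared entries is doubly stochastic
  set S : Matrix (Fin d) (Fin d) ℝ := fun i j => V i j ^ 2 with hS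
  have hrow : ∀ i, ∑ j, S i j = 1 := by
    intro i
    have := congrFun (congrFun hV i) i
    simpa [hS, Matrix.mul_apply, Matrix.one_apply, sq] using this
  have hcol : ∀ j, ∑ i, S i j = 1 := by
    intro j
    have := congrFun (congrFun hV' j) j
    simpa [hS, Matrix.mul_apply, Matrix.one_apply, sq] using this
  have hSmem : S ∈ doublyStochastic ℝ (Fin d) := by
    rw [mem_doublyStochastic_iff_sum]
    exact ⟨fun i j => sq_nonneg _, hrow, hcol⟩
  obtain ⟨w, hw0, hw1, hwS⟩ := exists_eq_sum_perm_of_mem_doublyStochastic hSmem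
  have hmono : Monovary L D := by
    intro i j hij
    have hji : j ≤ i := le_of_not_ge fun h => absurd (hD i j h) (not_le.mpr hij)
    exact hL j i hji
  have hentry : ∀ i, (V * Matrix.diagonal L * Vᵀ * Matrix.diagonal D) i i
      = ∑ j, S i j * (L j * D i) := by
    intro i
    rw [Matrix.mul_diagonal, Matrix.mul_apply, Finset.sum_mul]
    refine Finset.sum_congr rfl fun j _ => ?_
    rw [Matrix.mul_diagonal, Matrix.transpose_apply]
    simp only [hS]
    ring
  have hLHS : Matrix.trace (V * Matrix.diagonal L * Vᵀ * Matrix.diagonal D)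
      = ∑ i, ∑ j, S i j * (L j * D i) := by
    rw [Matrix.trace]
    exact Finset.sum_congr rfl fun i _ => hentry i
  have hRHS : Matrix.trace (Matrix.diagonal L * Matrix.diagonal D) = ∑ i, L i * D i := by
    simp [Matrix.diagonal_mul_diagonal, Matrix.trace, Matrix.diag]
  rw [hLHS, hRHS]
  have key : ∑ i, ∑ j, S i j * (L j * D i) = ∑ σ : Equiv.Perm (Fin d), w σ * ∑ i, L (σ i) * D i := by
    rw [← hwS]
    simp only [Finset.sum_apply, Matrix.sum_apply, Matrix.smul_apply, Equiv.Perm.permMatrix,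
      PEquiv.toMatrix_apply, Equiv.toPEquiv_apply, Option.mem_def, Option.some.injEq,
      smul_eq_mul, Finset.sum_mul, Finset.mul_sum]
    refine (Finset.sum_congr rfl fun i _ => Finset.sum_comm).trans ?_
    rw [Finset.sum_comm]
    refine Finset.sum_congr rfl fun σ _ => ?_
    refine Finset.sum_congr rfl fun i _ => ?_
    simp [ite_mul, mul_ite, Finset.sum_ite_eq, Finset.sum_ite_eq']
  rw [key]
  calc ∑ σ : Equiv.Perm (Fin d), w σ * ∑ i, L (σ i) * D i
      ≤ ∑ σ : Equiv.Perm (Fin d), w σ * ∑ i, L i * D i := by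
        refine Finset.sum_le_sum fun σ _ => ?_
        exact mul_le_mul_of_nonneg_left (hmono.sum_comp_perm_mul_le_sum_mul) (hw0 σ)
    _ = ∑ i, L i * D i := by rw [← Finset.sum_mul, hw1, one_mul]
end

section
/- Incomplete moments of the semicircle law near the right edge: for the semicircle density μ_sc(x) = √(4 − x²)/(2π) on [−2,2] and t ∈ (0, 4), ∫_{2−t}^{2} μ_sc(y)(y − 2 + t)² dy = (16/(105π)) t^{7/2} + O(t^{9/2}) as t → 0⁺. -/
open MeasureTheory Real

private lemma cont_rpow' (p : ℝ) (hp : 0 ≤ p) : Continuous fun u : ℝ => u ^ p :=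
  continuous_iff_continuousAt.mpr fun x => Real.continuousAt_rpow_const x p (Or.inr hp)

private lemma sq_rpow_half' (s : ℝ) (hs : 0 ≤ s) (n : ℕ) :
    (s ^ 2 : ℝ) ^ ((n : ℝ) / 2) = s ^ n := by
  have h : (((2:ℕ)):ℝ) * ((n:ℝ)/2) = (n:ℝ) := by push_cast; ring
  rw [← Real.rpow_natCast s 2, ← Real.rpow_mul hs, h, Real.rpow_natCast]

private lemma rpow_half_nat' (t : ℝ) (ht : 0 ≤ t) (n : ℕ) :
    t ^ ((n : ℝ) / 2) = (Real.sqrt t) ^ n := by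
  conv_lhs => rw [← Real.sq_sqrt ht]
  exact sq_rpow_half' _ (Real.sqrt_nonneg t) n

private lemma aux_main_integral' (t : ℝ) (ht : 0 < t) :
    ∫ u in (0:ℝ)..t, Real.sqrt u * (t - u) ^ 2 = 16 / 105 * t ^ ((7:ℝ)/2) := by
  have hF : ∀ x : ℝ, HasDerivAt
      (fun u : ℝ => 2/3 * t^2 * u ^ ((3:ℝ)/2) - 4/5 * t * u ^ ((5:ℝ)/2) + 2/7 * u ^ ((7:ℝ)/2))
      (t^2 * x ^ ((1:ℝ)/2) - 2*t*x ^ ((3:ℝ)/2) + x ^ ((5:ℝ)/2)) x := by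
    intro x
    have h1 := (Real.hasDerivAt_rpow_const (x := x) (p := (3:ℝ)/2)
      (Or.inr (by norm_num))).const_mul (2/3 * t^2)
    have h2 := (Real.hasDerivAt_rpow_const (x := x) (p := (5:ℝ)/2)
      (Or.inr (by norm_num))).const_mul (4/5 * t)
    have h3 := (Real.hasDerivAt_rpow_const (x := x) (p := (7:ℝ)/2)
      (Or.inr (by norm_num))).const_mul (2/7 : ℝ)
    refine ((h1.sub h2).add h3).congr_deriv ?_
    norm_num
    ring
  have hint : IntervalIntegrable
      (fun x : ℝ => t^2 * x ^ ((1:ℝ)/2) - 2*t*x ^ ((3:ℝ)/2) + x ^ ((5:ℝ)/2)) volume 0 t := by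
    apply Continuous.intervalIntegrable
    exact ((continuous_const.mul (cont_rpow' _ (by norm_num))).sub
      (continuous_const.mul (cont_rpow' _ (by norm_num)))).add (cont_rpow' _ (by norm_num))
  have hcong : Set.EqOn (fun u : ℝ => Real.sqrt u * (t - u) ^ 2)
      (fun u : ℝ => t^2 * u ^ ((1:ℝ)/2) - 2*t*u ^ ((3:ℝ)/2) + u ^ ((5:ℝ)/2))
      (Set.uIcc 0 t) := by
    intro u hu
    rw [Set.uIcc_of_le ht.le] at hu
    obtain ⟨hu0, hut⟩ := hu
    have e1 : u ^ ((1:ℝ)/2) = Real.sqrt u := by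
      rw [show (1:ℝ)/2 = ((1:ℕ):ℝ)/2 by norm_num, rpow_half_nat' u hu0, pow_one]
    have e3 : u ^ ((3:ℝ)/2) = (Real.sqrt u) ^ 3 := by
      rw [show (3:ℝ)/2 = ((3:ℕ):ℝ)/2 by norm_num, rpow_half_nat' u hu0]
    have e5 : u ^ ((5:ℝ)/2) = (Real.sqrt u) ^ 5 := by
      rw [show (5:ℝ)/2 = ((5:ℕ):ℝ)/2 by norm_num, rpow_half_nat' u hu0]
    have hsq : (Real.sqrt u) ^ 2 = u := Real.sq_sqrt hu0
    simp only [e1, e3, e5]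
    linear_combination (2*t*Real.sqrt u - Real.sqrt u * (u + (Real.sqrt u)^2)) * hsq
  rw [intervalIntegral.integral_congr hcong,
    intervalIntegral.integral_eq_sub_of_hasDerivAt (fun x _ => hF x) hint]
  have e3 : t ^ ((3:ℝ)/2) = (Real.sqrt t) ^ 3 := by
    rw [show (3:ℝ)/2 = ((3:ℕ):ℝ)/2 by norm_num, rpow_half_nat' t ht.le]
  have e5 : t ^ ((5:ℝ)/2) = (Real.sqrt t) ^ 5 := by
    rw [show (5:ℝ)/2 = ((5:ℕ):ℝ)/2 by norm_num, rpow_half_nat' t ht.le]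
  have e7 : t ^ ((7:ℝ)/2) = (Real.sqrt t) ^ 7 := by
    rw [show (7:ℝ)/2 = ((7:ℕ):ℝ)/2 by norm_num, rpow_half_nat' t ht.le]
  have hsq : (Real.sqrt t) ^ 2 = t := Real.sq_sqrt ht.le
  rw [e3, e5, e7]
  rw [Real.zero_rpow (by norm_num), Real.zero_rpow (by norm_num), Real.zero_rpow (by norm_num)]
  linear_combination (-(2/3*t*(Real.sqrt t)^3) + 2/15*(Real.sqrt t)^5) * hsq

/-- Incomplete moments of the semicircle law near the right edge:
`∫_{2−t}^{2} μ_sc(y)(y − 2 + t)² dy = (16/(105π)) t^{7/2} + O(t^{9/2})` as `t → 0⁺`,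
where `μ_sc(y) = √(4 − y²)/(2π)`. -/
theorem semicircle_edge_asymptotics :
    ∃ C > (0 : ℝ), ∃ t₀ > (0 : ℝ), ∀ t : ℝ, 0 < t → t < t₀ →
      |(∫ y in Set.Icc (2 - t) 2, Real.sqrt (4 - y ^ 2) / (2 * Real.pi) * (y - 2 + t) ^ 2)
          - 16 / (105 * Real.pi) * t ^ ((7 : ℝ) / 2)|
        ≤ C * t ^ ((9 : ℝ) / 2) := by
  refine ⟨1, one_pos, 1, one_pos, fun t ht ht1 => ?_⟩
  have hpi : (0:ℝ) < π := Real.pi_pos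
  have hpine : (π:ℝ) ≠ 0 := ne_of_gt hpi
  have h2t : (2:ℝ) - t ≤ 2 := by linarith
  have hs0 : (0:ℝ) ≤ Real.sqrt t := Real.sqrt_nonneg t
  have hsqt : (Real.sqrt t) ^ 2 = t := Real.sq_sqrt ht.le
  have hIcc : (∫ y in Set.Icc (2 - t) 2, Real.sqrt (4 - y ^ 2) / (2 * π) * (y - 2 + t) ^ 2)
      = ∫ y in (2 - t)..2, Real.sqrt (4 - y ^ 2) / (2 * π) * (y - 2 + t) ^ 2 := by
    rw [intervalIntegral.integral_of_le h2t, MeasureTheory.integral_Icc_eq_integral_Ioc]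
  have cpoly : Continuous fun y : ℝ => (y - 2 + t) ^ 2 :=
    ((continuous_id.sub continuous_const).add continuous_const).pow 2
  have hcont2 : Continuous fun y : ℝ => Real.sqrt (2 - y) / π * (y - 2 + t) ^ 2 :=
    (((Real.continuous_sqrt.comp (continuous_const.sub continuous_id)).div_const π).mul cpoly)
  have hcont3 : Continuous fun y : ℝ =>
      (Real.sqrt (4 - y ^ 2) - 2 * Real.sqrt (2 - y)) / (2 * π) * (y - 2 + t) ^ 2 := by
    have c1 : Continuous fun y : ℝ => Real.sqrt (4 - y ^ 2) :=
      Real.continuous_sqrt.comp (continuous_const.sub (continuous_id.pow 2))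
    have c2 : Continuous fun y : ℝ => 2 * Real.sqrt (2 - y) :=
      continuous_const.mul (Real.continuous_sqrt.comp (continuous_const.sub continuous_id))
    exact ((c1.sub c2).div_const (2 * π)).mul cpoly
  have hsplit : (∫ y in (2 - t)..2, Real.sqrt (4 - y ^ 2) / (2 * π) * (y - 2 + t) ^ 2)
      = (∫ y in (2 - t)..2, Real.sqrt (2 - y) / π * (y - 2 + t) ^ 2)
        + ∫ y in (2 - t)..2,
            (Real.sqrt (4 - y ^ 2) - 2 * Real.sqrt (2 - y)) / (2 * π) * (y - 2 + t) ^ 2 := by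
    rw [← intervalIntegral.integral_add (hcont2.intervalIntegrable _ _)
      (hcont3.intervalIntegrable _ _)]
    apply intervalIntegral.integral_congr
    intro y _
    field_simp
    ring
  have hmain : (∫ y in (2 - t)..2, Real.sqrt (2 - y) / π * (y - 2 + t) ^ 2)
      = 16 / (105 * π) * t ^ ((7:ℝ)/2) := by
    have hsub := intervalIntegral.integral_comp_sub_left (a := 2 - t) (b := 2)
      (fun u => Real.sqrt u / π * (t - u) ^ 2) 2
    have hco : (∫ y in (2 - t)..2, Real.sqrt (2 - y) / π * (y - 2 + t) ^ 2)
        = ∫ y in (2 - t)..2, Real.sqrt (2 - y) / π * (t - (2 - y)) ^ 2 := by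
      apply intervalIntegral.integral_congr
      intro y _
      ring_nf
    rw [hco, hsub, show (2:ℝ) - 2 = 0 by norm_num, show (2:ℝ) - (2 - t) = t by ring]
    have hdiv : (∫ u in (0:ℝ)..t, Real.sqrt u / π * (t - u) ^ 2)
        = (∫ u in (0:ℝ)..t, Real.sqrt u * (t - u) ^ 2) / π := by
      rw [← intervalIntegral.integral_div]
      apply intervalIntegral.integral_congr
      intro u _
      ring
    rw [hdiv, aux_main_integral' t ht]
    field_simp
  have herr : |∫ y in (2 - t)..2,
        (Real.sqrt (4 - y ^ 2) - 2 * Real.sqrt (2 - y)) / (2 * π) * (y - 2 + t) ^ 2|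
      ≤ (Real.sqrt t * t ^ 3 / (4 * π)) * t := by
    have hb : ∀ y ∈ Set.uIoc (2 - t) 2,
        ‖(Real.sqrt (4 - y ^ 2) - 2 * Real.sqrt (2 - y)) / (2 * π) * (y - 2 + t) ^ 2‖
          ≤ Real.sqrt t * t ^ 3 / (4 * π) := by
      intro y hy
      rw [Set.uIoc_of_le h2t] at hy
      obtain ⟨hy1, hy2⟩ := hy
      have h2y0 : (0:ℝ) ≤ 2 - y := by linarith
      have h2yt : 2 - y ≤ t := by linarith
      have hw0 : (0:ℝ) ≤ y - 2 + t := by linarith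
      have hwt : y - 2 + t ≤ t := by linarith
      have hy0 : (0:ℝ) ≤ 2 + y := by linarith
      have hfac : Real.sqrt (4 - y ^ 2) = Real.sqrt (2 - y) * Real.sqrt (2 + y) := by
        rw [show (4:ℝ) - y ^ 2 = (2 - y) * (2 + y) by ring, Real.sqrt_mul h2y0]
      set a := Real.sqrt (2 - y) with ha
      set b := Real.sqrt (2 + y) with hbdef
      have ha0 : 0 ≤ a := Real.sqrt_nonneg _
      have hb0 : 0 ≤ b := Real.sqrt_nonneg _
      have hbsq : b ^ 2 = 2 + y := Real.sq_sqrt hy0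
      have hb2 : b ≤ 2 := by nlinarith [sq_nonneg (b - 2)]
      have h2b0 : 0 ≤ 2 - b := by linarith
      have hb1 : 2 - b ≤ (2 - y) / 2 := by nlinarith [mul_nonneg h2b0 hb0]
      have hb1' : 2 - b ≤ t / 2 := by linarith
      have has : a ≤ Real.sqrt t := Real.sqrt_le_sqrt h2yt
      have hwsq : (y - 2 + t) ^ 2 ≤ t ^ 2 := by nlinarith
      have hX : (Real.sqrt (4 - y ^ 2) - 2 * Real.sqrt (2 - y)) / (2 * π) * (y - 2 + t) ^ 2
          = -(a * (2 - b) * (y - 2 + t) ^ 2 / (2 * π)) := by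
        rw [hfac]; field_simp; ring
      rw [hX, Real.norm_eq_abs, abs_neg, abs_of_nonneg
        (div_nonneg (mul_nonneg (mul_nonneg ha0 h2b0) (sq_nonneg _)) (by positivity))]
      have hnum : a * (2 - b) * (y - 2 + t) ^ 2 ≤ Real.sqrt t * (t / 2) * t ^ 2 := by
        have hab : a * (2 - b) ≤ Real.sqrt t * (t / 2) := mul_le_mul has hb1' h2b0 hs0
        exact mul_le_mul hab hwsq (sq_nonneg _) (by positivity)
      calc a * (2 - b) * (y - 2 + t) ^ 2 / (2 * π)
          ≤ Real.sqrt t * (t / 2) * t ^ 2 / (2 * π) :=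
            (div_le_div_iff_of_pos_right (by positivity)).mpr hnum
        _ = (Real.sqrt t * t ^ 3 / 2) / (2 * π) := by ring_nf
        _ = Real.sqrt t * t ^ 3 / (4 * π) := by
            rw [div_div, show (2:ℝ) * (2 * π) = 4 * π by ring]
    have hnorm := intervalIntegral.norm_integral_le_of_norm_le_const hb
    rw [Real.norm_eq_abs] at hnorm
    have habs : |(2:ℝ) - (2 - t)| = t := by rw [show (2:ℝ) - (2 - t) = t by ring]; exact abs_of_pos ht
    calc |∫ y in (2 - t)..2,
        (Real.sqrt (4 - y ^ 2) - 2 * Real.sqrt (2 - y)) / (2 * π) * (y - 2 + t) ^ 2|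
        ≤ Real.sqrt t * t ^ 3 / (4 * π) * |2 - (2 - t)| := hnorm
      _ = Real.sqrt t * t ^ 3 / (4 * π) * t := by rw [habs]
  rw [hIcc, hsplit, hmain]
  have hsimp : 16 / (105 * π) * t ^ ((7:ℝ)/2)
      + (∫ y in (2 - t)..2,
          (Real.sqrt (4 - y ^ 2) - 2 * Real.sqrt (2 - y)) / (2 * π) * (y - 2 + t) ^ 2)
      - 16 / (105 * π) * t ^ ((7:ℝ)/2)
      = ∫ y in (2 - t)..2,
          (Real.sqrt (4 - y ^ 2) - 2 * Real.sqrt (2 - y)) / (2 * π) * (y - 2 + t) ^ 2 := by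
    ring
  rw [hsimp]
  have h92 : t ^ ((9:ℝ)/2) = Real.sqrt t * t ^ 4 := by
    rw [show (9:ℝ)/2 = ((9:ℕ):ℝ)/2 by norm_num, rpow_half_nat' t ht.le]
    calc (Real.sqrt t) ^ 9 = Real.sqrt t * ((Real.sqrt t) ^ 2) ^ 4 := by ring
      _ = Real.sqrt t * t ^ 4 := by rw [hsqt]
  have hfin : Real.sqrt t * t ^ 3 / (4 * π) * t ≤ 1 * t ^ ((9:ℝ)/2) := by
    rw [h92, one_mul]
    have heq : Real.sqrt t * t ^ 3 / (4 * π) * t = (Real.sqrt t * t ^ 4) / (4 * π) := by ring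
    rw [heq]
    exact div_le_self (by positivity) (by nlinarith [Real.pi_gt_three])
  exact herr.trans hfin
end
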